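/- Let (A,V,χ,F,ν) be a crossed product system with preunit, assume F is a cocycle satisfying the twisted module condition, and let R be a k-subalgebra of A. Then (R⊗V) ∩ E ⊆ R·γ(V) = j_ν(R)γ(V), where R⊗V denotes the image of R⊗_k V in A⊗_k V, E := A×V, R·γ(V) is the k-span of {r·γ(v) : r ∈ R, v ∈ V}, and j_ν(R)γ(V) is the k-span of {μ_E(j_ν(r)⊗γ(v)) : r ∈ R, v ∈ V}. If moreover γ(V) ⊆ R⊗V, then (R⊗V) ∩ E = R·γ(V). -/
import Mathlib


open TensorProduct

noncomputable section

namespace WeakCrossedProduct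

variable {k : Type*} [Field k]
variable {A : Type*} [Ring A] [Algebra k A]
variable {V : Type*} [AddCommGroup V] [Module k V]

/-- The map `A ⊗ₖ (A ⊗ₖ V) → A ⊗ₖ V`, `a ⊗ x ↦ a • x`, i.e. `μ_A ⊗ id_V`. -/
def actMap : A ⊗[k] (A ⊗[k] V) →ₗ[k] A ⊗[k] V :=
  TensorProduct.lift (LinearMap.mk₂ k (fun (a : A) (x : A ⊗[k] V) => a • x)
    (fun a b x => add_smul a b x)
    (fun c a x => smul_assoc c a x)
    (fun a x y => smul_add a x y)
    (fun c a x => smul_comm a c x))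

/-- Given `g : V → A ⊗ V`, the map `A ⊗ V → A ⊗ V`, `a ⊗ u ↦ a • g u`. -/
def smulMap (g : V →ₗ[k] A ⊗[k] V) : A ⊗[k] V →ₗ[k] A ⊗[k] V :=
  TensorProduct.lift (LinearMap.mk₂ k (fun (a : A) (u : V) => a • g u)
    (fun a b u => add_smul a b (g u))
    (fun c a u => smul_assoc c a (g u))
    (fun a u u' => show a • g (u + u') = a • g u + a • g u' by
      rw [map_add, smul_add])
    (fun c a u => show a • g (c • u) = c • (a • g u) by
      rw [map_smul]; exact smul_comm a c (g u)))

/-- The right action of `a' ∈ A` on `A ⊗ V`: `(a ⊗ v) · a' := a • χ (v ⊗ a')`. -/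
def ract (χ : V ⊗[k] A →ₗ[k] A ⊗[k] V) (a' : A) : A ⊗[k] V →ₗ[k] A ⊗[k] V :=
  smulMap (χ ∘ₗ (TensorProduct.mk k V A).flip a')

/-- `(A,V,χ)` is a twisted space:
`χ ∘ (id_V ⊗ μ_A) = (μ_A ⊗ id_V) ∘ (id_A ⊗ χ) ∘ (χ ⊗ id_A)` (stated on pure tensors). -/
def IsTwisting (χ : V ⊗[k] A →ₗ[k] A ⊗[k] V) : Prop :=
  ∀ (v : V) (a b : A), χ (v ⊗ₜ[k] (a * b)) = ract χ b (χ (v ⊗ₜ[k] a))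

/-- `∇_χ(x) := x · 1_A`. -/
def nabla (χ : V ⊗[k] A →ₗ[k] A ⊗[k] V) : A ⊗[k] V →ₗ[k] A ⊗[k] V :=
  ract χ 1

/-- `A × V := ∇_χ(A ⊗ V)`. -/
def AxV (χ : V ⊗[k] A →ₗ[k] A ⊗[k] V) : Submodule k (A ⊗[k] V) :=
  LinearMap.range (nabla χ)

/-- `X_χ := {x ∈ A ⊗ V : x · 1_A = 0}`. -/
def Xchi (χ : V ⊗[k] A →ₗ[k] A ⊗[k] V) : Submodule k (A ⊗[k] V) :=
  LinearMap.ker (nabla χ)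

/-- `μ_𝓔 := (μ_A ⊗ id_V) ∘ (μ_A ⊗ F) ∘ (id_A ⊗ χ ⊗ id_V)`. -/
def muE (χ : V ⊗[k] A →ₗ[k] A ⊗[k] V) (F : V ⊗[k] V →ₗ[k] A ⊗[k] V) :
    (A ⊗[k] V) ⊗[k] (A ⊗[k] V) →ₗ[k] A ⊗[k] V :=
  actMap ∘ₗ
  LinearMap.lTensor A (actMap) ∘ₗ
  LinearMap.lTensor A (LinearMap.lTensor A F ∘ₗ (TensorProduct.assoc k A V V).toLinearMap) ∘ₗ
  LinearMap.lTensor A (LinearMap.rTensor V χ) ∘ₗ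
  LinearMap.lTensor A (TensorProduct.assoc k V A V).symm.toLinearMap ∘ₗ
  (TensorProduct.assoc k A V (A ⊗[k] V)).toLinearMap

/-- The twisted module condition (stated on pure tensors). -/
def TwistedModuleCond (χ : V ⊗[k] A →ₗ[k] A ⊗[k] V) (F : V ⊗[k] V →ₗ[k] A ⊗[k] V) : Prop :=
  ∀ (v w : V) (a : A),
    ract χ a (F (v ⊗ₜ[k] w)) = muE χ F (((1 : A) ⊗ₜ[k] v) ⊗ₜ[k] χ (w ⊗ₜ[k] a))

/-- The cocycle condition (stated on pure tensors). -/
def CocycleCond (χ : V ⊗[k] A →ₗ[k] A ⊗[k] V) (F : V ⊗[k] V →ₗ[k] A ⊗[k] V) : Prop :=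
  ∀ (v w u : V),
    smulMap (F ∘ₗ (TensorProduct.mk k V V).flip u) (F (v ⊗ₜ[k] w)) =
      muE χ F (((1 : A) ⊗ₜ[k] v) ⊗ₜ[k] F (w ⊗ₜ[k] u))

/-- Preunit condition (i). -/
def Preunit1 (χ : V ⊗[k] A →ₗ[k] A ⊗[k] V) (F : V ⊗[k] V →ₗ[k] A ⊗[k] V)
    (ν : A ⊗[k] V) : Prop :=
  ∀ v : V, muE χ F (((1 : A) ⊗ₜ[k] v) ⊗ₜ[k] ν) = nabla χ ((1 : A) ⊗ₜ[k] v)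

/-- Preunit condition (ii). -/
def Preunit2 (χ : V ⊗[k] A →ₗ[k] A ⊗[k] V) (F : V ⊗[k] V →ₗ[k] A ⊗[k] V)
    (ν : A ⊗[k] V) : Prop :=
  ∀ v : V, smulMap (F ∘ₗ (TensorProduct.mk k V V).flip v) ν = nabla χ ((1 : A) ⊗ₜ[k] v)

/-- Preunit condition (iii). -/
def Preunit3 (χ : V ⊗[k] A →ₗ[k] A ⊗[k] V) (ν : A ⊗[k] V) : Prop :=
  ∀ a : A, ract χ a ν = a • ν

/-- `γ(v) := ∇_χ(1_A ⊗ v)`. -/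
def gammaMap (χ : V ⊗[k] A →ₗ[k] A ⊗[k] V) : V → A ⊗[k] V :=
  fun v => nabla χ ((1 : A) ⊗ₜ[k] v)

/-- `j'_ν(a) := a · ν(1)`. -/
def jnu' (ν : A ⊗[k] V) : A → A ⊗[k] V := fun a => a • ν

/-- `j_ν(a) := ∇_χ(j'_ν(a))`. -/
def jnu (χ : V ⊗[k] A →ₗ[k] A ⊗[k] V) (ν : A ⊗[k] V) : A → A ⊗[k] V :=
  fun a => nabla χ (a • ν)

/-- The image of `R ⊗ₖ V` in `A ⊗ₖ V`. -/
def RV (R : Subalgebra k A) : Submodule k (A ⊗[k] V) :=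
  LinearMap.range (LinearMap.rTensor V R.val.toLinearMap)

lemma smulMap_tmul (g : V →ₗ[k] A ⊗[k] V) (a : A) (u : V) :
    smulMap g (a ⊗ₜ[k] u) = a • g u := rfl

lemma actMap_tmul (a : A) (x : A ⊗[k] V) : actMap (a ⊗ₜ[k] x) = a • x := rfl

lemma smulMap_smul (g : V →ₗ[k] A ⊗[k] V) (a : A) (x : A ⊗[k] V) :
    smulMap g (a • x) = a • smulMap g x := by
  induction x using TensorProduct.induction_on with
  | zero => simp
  | tmul b u => rw [smul_tmul', smulMap_tmul, smulMap_tmul, smul_eq_mul, mul_smul]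
  | add x y hx hy => rw [smul_add, map_add, map_add, hx, hy, smul_add]

lemma ract_tmul (χ : V ⊗[k] A →ₗ[k] A ⊗[k] V) (b a : A) (u : V) :
    ract χ b (a ⊗ₜ[k] u) = a • χ (u ⊗ₜ[k] b) := rfl

lemma ract_smul (χ : V ⊗[k] A →ₗ[k] A ⊗[k] V) (b a : A) (x : A ⊗[k] V) :
    ract χ b (a • x) = a • ract χ b x := smulMap_smul _ a x

lemma nabla_tmul (χ : V ⊗[k] A →ₗ[k] A ⊗[k] V) (a : A) (v : V) :
    nabla χ (a ⊗ₜ[k] v) = a • χ (v ⊗ₜ[k] 1) := rfl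

lemma nabla_smul (χ : V ⊗[k] A →ₗ[k] A ⊗[k] V) (a : A) (x : A ⊗[k] V) :
    nabla χ (a • x) = a • nabla χ x := ract_smul χ 1 a x

lemma gamma_eq (χ : V ⊗[k] A →ₗ[k] A ⊗[k] V) (v : V) :
    gammaMap χ v = χ (v ⊗ₜ[k] 1) := by
  rw [gammaMap, nabla_tmul, one_smul]

lemma nabla_gamma {χ : V ⊗[k] A →ₗ[k] A ⊗[k] V} (hχ : IsTwisting χ) (v : V) :
    nabla χ (gammaMap χ v) = gammaMap χ v := by
  have := hχ v 1 1
  rw [one_mul] at this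
  rw [gamma_eq, nabla, ← this]

lemma nabla_idem {χ : V ⊗[k] A →ₗ[k] A ⊗[k] V} (hχ : IsTwisting χ) (x : A ⊗[k] V) :
    nabla χ (nabla χ x) = nabla χ x := by
  induction x using TensorProduct.induction_on with
  | zero => simp
  | tmul a v =>
    rw [nabla_tmul, ← gamma_eq, nabla_smul, nabla_gamma hχ]
  | add x y hx hy => rw [map_add, map_add, hx, hy]

lemma mem_AxV_iff {χ : V ⊗[k] A →ₗ[k] A ⊗[k] V} (hχ : IsTwisting χ) (x : A ⊗[k] V) :
    x ∈ AxV χ ↔ nabla χ x = x := by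
  constructor
  · rintro ⟨y, rfl⟩; exact nabla_idem hχ y
  · intro h; exact ⟨x, h⟩

lemma actMap_lTensor_assoc (F : V ⊗[k] V →ₗ[k] A ⊗[k] V) (w : V) (t : A ⊗[k] V) :
    actMap (LinearMap.lTensor A F ((TensorProduct.assoc k A V V) (t ⊗ₜ[k] w))) =
      smulMap (F ∘ₗ (TensorProduct.mk k V V).flip w) t := by
  induction t using TensorProduct.induction_on with
  | zero => simp
  | tmul d u => simp [smulMap_tmul, actMap_tmul]
  | add x y hx hy => rw [add_tmul, map_add, map_add, map_add, map_add, hx, hy]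

lemma muE_tmul_pure (χ : V ⊗[k] A →ₗ[k] A ⊗[k] V) (F : V ⊗[k] V →ₗ[k] A ⊗[k] V)
    (z : A ⊗[k] V) (b : A) (w : V) :
    muE χ F (z ⊗ₜ[k] (b ⊗ₜ[k] w)) =
      smulMap (F ∘ₗ (TensorProduct.mk k V V).flip w) (ract χ b z) := by
  induction z using TensorProduct.induction_on with
  | zero => simp
  | tmul a u =>
    rw [ract_tmul, smulMap_smul]
    simp only [muE, LinearMap.comp_apply, LinearEquiv.coe_coe, TensorProduct.assoc_tmul,
      LinearMap.lTensor_tmul, TensorProduct.assoc_symm_tmul, LinearMap.rTensor_tmul,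
      actMap_tmul]
    rw [actMap_lTensor_assoc]
  | add x y hx hy => rw [add_tmul, map_add, map_add, map_add, hx, hy]

lemma muE_smul_left (χ : V ⊗[k] A →ₗ[k] A ⊗[k] V) (F : V ⊗[k] V →ₗ[k] A ⊗[k] V)
    (a : A) (z : A ⊗[k] V) (y : A ⊗[k] V) :
    muE χ F ((a • z) ⊗ₜ[k] y) = a • muE χ F (z ⊗ₜ[k] y) := by
  induction y using TensorProduct.induction_on with
  | zero => simp
  | tmul b w => rw [muE_tmul_pure, muE_tmul_pure, ract_smul, smulMap_smul]
  | add x y hx hy =>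
    rw [TensorProduct.tmul_add, TensorProduct.tmul_add, map_add, map_add, hx, hy, smul_add]

lemma muE_nu_left {χ : V ⊗[k] A →ₗ[k] A ⊗[k] V} {F : V ⊗[k] V →ₗ[k] A ⊗[k] V}
    {ν : A ⊗[k] V} (hν2 : Preunit2 χ F ν) (hν3 : Preunit3 χ ν) (y : A ⊗[k] V) :
    muE χ F (ν ⊗ₜ[k] y) = nabla χ y := by
  induction y using TensorProduct.induction_on with
  | zero => simp
  | tmul b w =>
    rw [muE_tmul_pure, hν3 b, smulMap_smul, hν2 w, nabla_tmul, nabla_tmul, one_smul]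
  | add x y hx hy =>
    rw [TensorProduct.tmul_add, map_add, map_add, hx, hy]

lemma jnu_eq {χ : V ⊗[k] A →ₗ[k] A ⊗[k] V} {ν : A ⊗[k] V} (hν3 : Preunit3 χ ν) (r : A) :
    jnu χ ν r = r • ν := by
  have hnu : nabla χ ν = ν := by
    have := hν3 1; rwa [one_smul] at this
  rw [jnu, nabla_smul, hnu]

lemma muE_jnu_gamma {χ : V ⊗[k] A →ₗ[k] A ⊗[k] V} {F : V ⊗[k] V →ₗ[k] A ⊗[k] V}
    {ν : A ⊗[k] V} (hχ : IsTwisting χ) (hν2 : Preunit2 χ F ν) (hν3 : Preunit3 χ ν)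
    (r : A) (v : V) :
    muE χ F (jnu χ ν r ⊗ₜ[k] gammaMap χ v) = r • gammaMap χ v := by
  rw [jnu_eq hν3, muE_smul_left, muE_nu_left hν2 hν3, nabla_gamma hχ]

theorem statement_15 (χ : V ⊗[k] A →ₗ[k] A ⊗[k] V) (F : V ⊗[k] V →ₗ[k] A ⊗[k] V)
    (ν : A ⊗[k] V)
    (hχ : IsTwisting χ) (hF : ∀ x : V ⊗[k] V, F x ∈ AxV χ)
    (hν1 : Preunit1 χ F ν) (hν2 : Preunit2 χ F ν) (hν3 : Preunit3 χ ν)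
    (htm : TwistedModuleCond χ F) (hcoc : CocycleCond χ F)
    (R : Subalgebra k A) :
    (RV R ⊓ AxV χ ≤
      Submodule.span k {x : A ⊗[k] V | ∃ r ∈ R, ∃ v : V, x = r • gammaMap χ v}) ∧
    (Submodule.span k {x : A ⊗[k] V | ∃ r ∈ R, ∃ v : V, x = r • gammaMap χ v} =
      Submodule.span k
        {x : A ⊗[k] V | ∃ r ∈ R, ∃ v : V, x = muE χ F (jnu χ ν r ⊗ₜ[k] gammaMap χ v)}) ∧
    ((∀ v : V, gammaMap χ v ∈ RV R) →
      RV R ⊓ AxV χ =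
        Submodule.span k {x : A ⊗[k] V | ∃ r ∈ R, ∃ v : V, x = r • gammaMap χ v}) := by
  have aux : ∀ y : R ⊗[k] V, nabla χ ((LinearMap.rTensor V R.val.toLinearMap) y) ∈
      Submodule.span k {x : A ⊗[k] V | ∃ r ∈ R, ∃ v : V, x = r • gammaMap χ v} := by
    intro y
    induction y using TensorProduct.induction_on with
    | zero => simp
    | tmul r v =>
      apply Submodule.subset_span
      refine ⟨(r : A), r.2, v, ?_⟩
      rw [LinearMap.rTensor_tmul, gamma_eq]
      rfl
    | add a b ha hb =>
      rw [map_add, map_add]; exact Submodule.add_mem _ ha hb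
  have hle : RV R ⊓ AxV χ ≤
      Submodule.span k {x : A ⊗[k] V | ∃ r ∈ R, ∃ v : V, x = r • gammaMap χ v} := by
    intro x hx
    obtain ⟨hx1, hx2⟩ := Submodule.mem_inf.mp hx
    obtain ⟨y, rfl⟩ := hx1
    rw [← (mem_AxV_iff hχ _).mp hx2]
    exact aux y
  refine ⟨hle, ?_, ?_⟩
  · congr 1
    ext x
    constructor
    · rintro ⟨r, hr, v, rfl⟩
      exact ⟨r, hr, v, (muE_jnu_gamma hχ hν2 hν3 r v).symm⟩
    · rintro ⟨r, hr, v, rfl⟩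
      exact ⟨r, hr, v, muE_jnu_gamma hχ hν2 hν3 r v⟩
  · intro hγ
    refine le_antisymm hle ?_
    rw [Submodule.span_le]
    rintro x ⟨r, hr, v, rfl⟩
    refine Submodule.mem_inf.mpr ⟨?_, ?_⟩
    · obtain ⟨y, hy⟩ := hγ v
      rw [← hy]
      clear hy
      induction y using TensorProduct.induction_on with
      | zero => rw [map_zero, smul_zero]; exact Submodule.zero_mem _
      | tmul s w =>
        refine ⟨(⟨r, hr⟩ * s : R) ⊗ₜ[k] w, ?_⟩
        rw [LinearMap.rTensor_tmul, LinearMap.rTensor_tmul, smul_tmul']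
        rfl
      | add a b ha hb =>
        rw [map_add, smul_add]; exact Submodule.add_mem _ ha hb
    · exact (mem_AxV_iff hχ _).mpr (by rw [nabla_smul, nabla_gamma hχ])

end WeakCrossedProduct
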